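/- arXiv:1506.01980 — 3 statements merged into one kernel-verified Lean document; each statement's English description precedes it below -/
import Mathlib

section
/- Fix elements α, β of a commutative ring (or real numbers). For integers n ≥ 0 and r, define the polynomial Z_{n,r}(x) = C(n,r) · Π_{i=r}^{n−1} (xα + β + iαβ) for 0 ≤ r ≤ n (an empty product when r = n, so Z_{n,n}(x) = 1), and Z_{n,r}(x) = 0 when r < 0 or r > n. Then for all n ≥ 0 and all 0 ≤ r ≤ n+1: Z_{n+1,r}(x) = (xα + β + rαβ) · Z_{n,r}(x+β) + Z_{n,r−1}(x+β). -/
open scoped Classical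

noncomputable section

/-- The polynomial `Z_{n,r}(x) = C(n,r) ∏_{i=r}^{n-1} (xα + β + iαβ)` for
`0 ≤ r ≤ n`, and `0` otherwise. -/
def Zpoly {R : Type*} [CommRing R] (a b : R) (n : ℕ) (r : ℤ) (x : R) : R :=
  if 0 ≤ r ∧ r ≤ (n : ℤ) then
    (n.choose r.toNat : R) * ∏ i ∈ Finset.Ico r.toNat n, (x * a + b + (i : R) * a * b)
  else 0

/-! Replacing `x` by `x + β` raises the index of every factor `xα + β + iαβ` by one, so both
sides become binomial coefficients times products over `r ≤ i ≤ n` at the same `x`, and the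
recursion reduces to Pascal's rule `C(n+1,r) = C(n,r-1) + C(n,r)` after splitting off the
factor `i = r`. -/

section

open Finset

variable {R : Type*} [CommRing R] (a b : R)

theorem Zpoly_of_neg (n : ℕ) {r : ℤ} (hr : r < 0) (x : R) : Zpoly a b n r x = 0 :=
  if_neg fun h => hr.not_ge h.1

-- For `m > n` the definition's `else` branch agrees with the formula since `C(n,m) = 0`.
theorem Zpoly_natCast (n m : ℕ) (x : R) :
    Zpoly a b n m x = n.choose m * ∏ i ∈ Ico m n, (x * a + b + (i : R) * a * b) := by
  unfold Zpoly
  split_ifs with h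
  · rw [Int.toNat_natCast]
  · rw [Nat.choose_eq_zero_of_lt (by omega), Nat.cast_zero, zero_mul]

theorem Zpoly_natCast_add_right (n m : ℕ) (x : R) :
    Zpoly a b n m (x + b) =
      n.choose m * ∏ i ∈ Ico (m + 1) (n + 1), (x * a + b + (i : R) * a * b) := by
  rw [Zpoly_natCast, ← prod_Ico_add']
  congr 1
  refine prod_congr rfl fun i _ => ?_
  push_cast
  ring

theorem choose_mul_prod_Ico_eq_mul_prod_Ico_succ (f : ℕ → R) (n m : ℕ) :
    (n.choose m : R) * ∏ i ∈ Ico m (n + 1), f i =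
      n.choose m * (f m * ∏ i ∈ Ico (m + 1) (n + 1), f i) := by
  rcases le_or_gt m n with hmn | hnm
  · rw [prod_eq_prod_Ico_succ_bot (Nat.lt_succ_of_le hmn)]
  · simp [Nat.choose_eq_zero_of_lt hnm]

end

theorem Zpoly_recursion_general {R : Type*} [CommRing R] (a b : R) (n : ℕ) (r : ℤ)
    (x : R) :
    Zpoly a b (n + 1) r x =
      (x * a + b + (r : R) * a * b) * Zpoly a b n r (x + b) +
        Zpoly a b n (r - 1) (x + b) := by
  rcases lt_or_ge r 0 with hr | hr
  · rw [Zpoly_of_neg _ _ _ hr, Zpoly_of_neg _ _ _ hr, Zpoly_of_neg _ _ _ (by omega), mul_zero,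
      add_zero]
  lift r to ℕ using hr with m
  rw [Zpoly_natCast, Zpoly_natCast_add_right, Int.cast_natCast]
  cases m with
  | zero =>
    rw [Zpoly_of_neg _ _ _ (by omega), Finset.prod_eq_prod_Ico_succ_bot n.succ_pos]
    simp
  | succ k =>
    rw [show ((k + 1 : ℕ) : ℤ) - 1 = k by omega, Zpoly_natCast_add_right,
      Nat.choose_succ_succ', Nat.cast_add]
    linear_combination choose_mul_prod_Ico_eq_mul_prod_Ico_succ
      (fun i : ℕ => x * a + b + (i : R) * a * b) n (k + 1)

/-- The polynomials `Z_{n,r}(x)` satisfy the recursion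
`Z_{n+1,r}(x) = (xα + β + rαβ)·Z_{n,r}(x+β) + Z_{n,r-1}(x+β)` for all `n ≥ 0`
and all `0 ≤ r ≤ n+1`. -/
theorem Zpoly_recursion {R : Type*} [CommRing R] (a b : R) (n : ℕ) (r : ℤ)
    (hr0 : 0 ≤ r) (hrn : r ≤ (n : ℤ) + 1) (x : R) :
    Zpoly a b (n + 1) r x =
      (x * a + b + (r : R) * a * b) * Zpoly a b n r (x + b) +
        Zpoly a b n (r - 1) (x + b) :=
  Zpoly_recursion_general a b n r x

end
end

section
/- The number of multi-Catalan tableaux of size n whose type has r A's is [2(r+1)/(n+r+2)] · C(2n+1, n−r), for 0 ≤ r ≤ n. -/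
open scoped Classical

noncomputable section

/-- The three letters of the two-species PASEP: heavy particle `D`, light
particle `A`, and hole `E`. -/
inductive Letter : Type
  | D | A | E
  deriving DecidableEq

/-- A word in the letters `{D, A, E}`. -/
abbrev Word := List Letter

/-- The states of the two-species PASEP of length `n` with exactly `r` light
particles are the words of length `n` with exactly `r` `A`'s. -/
def stateSpace (n r : ℕ) : Set Word :=
  {w | w.length = n ∧ w.count Letter.A = r}

/-! ### Multi-Catalan tableaux

A multi-Catalan tableau of type `w` is encoded by its boxes: rows are indexed
by the positions of the `D`'s and `A`'s of `w` (from top to bottom), columns by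
the positions of the `E`'s and `A`'s of `w` (from right to left), and the box
in row `p` and column `p'` is present exactly when `p < p'`. -/

/-- The symbols `α` and `β` that may be placed in boxes. -/
inductive MSymb : Type
  | a | b
  deriving DecidableEq

/-- `(p, p')` is a box of the multi-Catalan tableau of type `w`: `p < p'`, the
letter at position `p` is `D` or `A` (a D-row or A-row), and the letter at
position `p'` is `E` or `A` (an E-column or A-column). -/
def MCTCell (w : Word) (c : ℕ × ℕ) : Prop :=
  c.1 < c.2 ∧ c.2 < w.length ∧
  (w[c.1]? = some Letter.D ∨ w[c.1]? = some Letter.A) ∧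
  (w[c.2]? = some Letter.E ∨ w[c.2]? = some Letter.A)

/-- There is a `β` strictly to the right of the box `c` in the same row
(columns with smaller position are farther right). -/
def MCTBetaRight (F : ℕ × ℕ → Option MSymb) (c : ℕ × ℕ) : Prop :=
  ∃ j, c.1 < j ∧ j < c.2 ∧ F (c.1, j) = some MSymb.b

/-- There is an `α` strictly below the box `c` in the same column (rows with
larger position are farther down). -/
def MCTAlphaBelow (F : ℕ × ℕ → Option MSymb) (c : ℕ × ℕ) : Prop :=
  ∃ i, c.1 < i ∧ i < c.2 ∧ F (i, c.2) = some MSymb.a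

/-- `F` is a (filled) multi-Catalan tableau of type `w`: every box left of a
`β` in its row is empty, every box above an `α` in its column is empty, a `DE`
box not forced to be empty contains `α` or `β`, a `DA` box not forced to be
empty contains `β`, and an `AE` box not forced to be empty contains `α`
(symbols `α` only in E-columns, `β` only in D-rows). -/
structure IsMCT (w : Word) (F : ℕ × ℕ → Option MSymb) : Prop where
  support : ∀ c, ¬MCTCell w c → F c = none
  alpha_col : ∀ c, F c = some MSymb.a → w[c.2]? = some Letter.E
  beta_row : ∀ c, F c = some MSymb.b → w[c.1]? = some Letter.D
  left_of_beta : ∀ c, F c ≠ none → ¬MCTBetaRight F c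
  above_alpha : ∀ c, F c ≠ none → ¬MCTAlphaBelow F c
  de_full : ∀ c, MCTCell w c → w[c.1]? = some Letter.D → w[c.2]? = some Letter.E →
    ¬MCTBetaRight F c → ¬MCTAlphaBelow F c → F c ≠ none
  da_full : ∀ c, MCTCell w c → w[c.1]? = some Letter.D → w[c.2]? = some Letter.A →
    ¬MCTBetaRight F c → ¬MCTAlphaBelow F c → F c = some MSymb.b
  ae_full : ∀ c, MCTCell w c → w[c.1]? = some Letter.A → w[c.2]? = some Letter.E →
    ¬MCTBetaRight F c → ¬MCTAlphaBelow F c → F c = some MSymb.a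

/-- The multiplicative weight contributed by the box `c`. -/
def mctCellWt {R : Type*} [CommRing R] (a b : R) (F : ℕ × ℕ → Option MSymb) (c : ℕ × ℕ) : R :=
  match F c with
  | some MSymb.a => a
  | some MSymb.b => b
  | none => 1

/-- The weight of a multi-Catalan tableau of type `w`: the product of all its
symbols, times `α^k β^(n-k-r)` where `k` is the number of `D`'s and `n-k-r` the
number of `E`'s of `w`. -/
def mctWt {R : Type*} [CommRing R] (a b : R) (w : Word) (F : ℕ × ℕ → Option MSymb) : R :=
  a ^ (w.count Letter.D) * b ^ (w.count Letter.E) *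
    ∏ᶠ c ∈ {c | MCTCell w c}, mctCellWt a b F c


/-!
Deleting a suitable line (row or column) of a multi-Catalan tableau, whose content is forced by
the rest of the tableau, shows that the number `N w` of tableaux of type `w` obeys the relations
of the two-species Matrix Ansatz: `N (D^(j+1) E w) = N (D^j E w) + N (D^(j+1) w)` (split by the
symbol in the box of the adjacent pair `DE`), `N (D^(j+1) A w) = N (D^j A w)`,
`N (E w) = N (A w) = N w` and `N (D^j) = 1`. Summing over the words `w` of length `n` with `r`
letters `A`, the totals of `N (D^j w)` satisfy a recursion in `n` solved by the ballot numbers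
`C(2n+j+1, n-r) - C(2n+j+1, n-r-1)`, which for `j = 0` is the stated closed form.
-/

namespace MultiCatalan

abbrev Filling := ℕ × ℕ → Option MSymb

def MCTUnforced (F : Filling) (c : ℕ × ℕ) : Prop :=
  c.1 < c.2 ∧ ¬MCTBetaRight F c ∧ ¬MCTAlphaBelow F c

/-- The possible contents of an unforced box, given the letters of its row and its column
(`none` as a letter: position out of range). -/
def mctAllowed : Option Letter → Option Letter → Set (Option MSymb)
  | some .D, some .E => {some .a, some .b}
  | some .D, some .A => {some .b}
  | some .A, some .E => {some .a}
  | _, _ => {none}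

def IsMCTAt (w : Word) (F : Filling) (c : ℕ × ℕ) : Prop :=
  F c ∈ if MCTUnforced F c then mctAllowed w[c.1]? w[c.2]? else {none}

section Local

variable {w : Word} {F : Filling} {c : ℕ × ℕ}

theorem mctCell_iff :
    MCTCell w c ↔ c.1 < c.2 ∧ (w[c.1]? = some .D ∨ w[c.1]? = some .A) ∧
      (w[c.2]? = some .E ∨ w[c.2]? = some .A) := by
  refine ⟨fun ⟨h1, _, h3, h4⟩ => ⟨h1, h3, h4⟩, fun ⟨h1, h3, h4⟩ => ⟨h1, ?_, h3, h4⟩⟩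
  rcases h4 with h | h <;> exact (List.getElem?_eq_some_iff.mp h).1

theorem some_a_mem_mctAllowed {p q : Option Letter} :
    some .a ∈ mctAllowed p q ↔ (p = some .D ∨ p = some .A) ∧ q = some .E := by
  rcases p with _ | _ | _ | _ <;> rcases q with _ | _ | _ | _ <;> simp [mctAllowed]

theorem some_b_mem_mctAllowed {p q : Option Letter} :
    some .b ∈ mctAllowed p q ↔ p = some .D ∧ (q = some .E ∨ q = some .A) := by
  rcases p with _ | _ | _ | _ <;> rcases q with _ | _ | _ | _ <;> simp [mctAllowed]

theorem none_mem_mctAllowed {p q : Option Letter} :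
    none ∈ mctAllowed p q ↔
      ¬(p = some .D ∧ q = some .E) ∧ ¬(p = some .D ∧ q = some .A) ∧
        ¬(p = some .A ∧ q = some .E) := by
  rcases p with _ | _ | _ | _ <;> rcases q with _ | _ | _ | _ <;> simp [mctAllowed]

theorem mctAllowed_some_D_right (p : Option Letter) : mctAllowed p (some .D) = {none} := by
  rcases p with _ | _ | _ | _ <;> rfl

theorem mctAllowed_none_right (p : Option Letter) : mctAllowed p none = {none} := by
  rcases p with _ | _ | _ | _ <;> rfl

theorem mctAllowed_some_E_left (q : Option Letter) : mctAllowed (some .E) q = {none} := by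
  rcases q with _ | _ | _ | _ <;> rfl

theorem mctAllowed_of_ne_D {l : Letter} (hl : l ≠ .D) (q : Option Letter) :
    mctAllowed (some l) q = if l = .A ∧ q = some .E then {some .a} else {none} := by
  rcases l <;> rcases q with _ | _ | _ | _ <;> simp_all [mctAllowed]

theorem isMCTAt_iff_of_unforced (hc : MCTUnforced F c) :
    IsMCTAt w F c ↔ F c ∈ mctAllowed w[c.1]? w[c.2]? := by
  rw [IsMCTAt, if_pos hc]

theorem isMCTAt_iff_of_not_unforced (hc : ¬MCTUnforced F c) : IsMCTAt w F c ↔ F c = none := by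
  rw [IsMCTAt, if_neg hc, Set.mem_singleton_iff]

theorem isMCTAt_iff_of_mctAllowed_eq (h : mctAllowed w[c.1]? w[c.2]? = {none}) :
    IsMCTAt w F c ↔ F c = none := by
  unfold IsMCTAt; split_ifs <;> simp [h]

theorem IsMCTAt.mem_mctAllowed (h : IsMCTAt w F c) (hc : MCTUnforced F c) :
    F c ∈ mctAllowed w[c.1]? w[c.2]? :=
  (isMCTAt_iff_of_unforced hc).1 h

theorem IsMCTAt.unforced (h : IsMCTAt w F c) (hF : F c ≠ none) : MCTUnforced F c :=
  by_contra fun hc => hF ((isMCTAt_iff_of_not_unforced hc).1 h)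

theorem IsMCTAt.getElem?_eq_D (h : IsMCTAt w F c) (hF : F c = some .b) : w[c.1]? = some .D :=
  (some_b_mem_mctAllowed.1 (hF ▸ h.mem_mctAllowed (h.unforced (by simp [hF])))).1

theorem _root_.IsMCT.isMCTAt (h : IsMCT w F) (c : ℕ × ℕ) : IsMCTAt w F c := by
  unfold IsMCTAt
  split_ifs with hc
  · rcases hF : F c with _ | s
    · obtain ⟨hlt, hβ, hα⟩ := hc
      have cell := fun hp hq => (mctCell_iff (w := w)).2 ⟨hlt, hp, hq⟩
      refine none_mem_mctAllowed.2 ⟨fun ⟨hp, hq⟩ => ?_, fun ⟨hp, hq⟩ => ?_, fun ⟨hp, hq⟩ => ?_⟩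
      · exact h.de_full c (cell (.inl hp) (.inl hq)) hp hq hβ hα hF
      · simpa [hF] using h.da_full c (cell (.inl hp) (.inr hq)) hp hq hβ hα
      · simpa [hF] using h.ae_full c (cell (.inr hp) (.inl hq)) hp hq hβ hα
    · have hcell : MCTCell w c := by_contra fun hcell => by simp [h.support c hcell] at hF
      obtain ⟨-, hp, hq⟩ := mctCell_iff.1 hcell
      rcases s
      · exact some_a_mem_mctAllowed.2 ⟨hp, h.alpha_col c hF⟩
      · exact some_b_mem_mctAllowed.2 ⟨h.beta_row c hF, hq⟩
  · simp only [MCTUnforced, not_and_or, not_not, not_lt] at hc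
    rcases hc with hc | hc | hc
    · exact h.support c fun hcell => absurd hcell.1 (not_lt.2 hc)
    · by_contra hF; exact h.left_of_beta c hF hc
    · by_contra hF; exact h.above_alpha c hF hc

theorem isMCT_of_forall_isMCTAt (h : ∀ c, IsMCTAt w F c) : IsMCT w F := by
  have full : ∀ c, MCTCell w c → ¬MCTBetaRight F c → ¬MCTAlphaBelow F c →
      F c ∈ mctAllowed w[c.1]? w[c.2]? := fun c hc hβ hα => (h c).mem_mctAllowed ⟨hc.1, hβ, hα⟩
  have filled : ∀ c s, F c = some s → c.1 < c.2 ∧ F c ∈ mctAllowed w[c.1]? w[c.2]? :=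
    fun c s hF => have hu := (h c).unforced (by simp [hF]); ⟨hu.1, (h c).mem_mctAllowed hu⟩
  constructor
  · intro c hc
    by_contra hF
    obtain ⟨s, hs⟩ := Option.ne_none_iff_exists'.1 hF
    obtain ⟨hlt, hmem⟩ := filled c s hs
    rw [hs] at hmem
    refine hc (mctCell_iff.2 ⟨hlt, ?_⟩)
    rcases s
    · obtain ⟨hp, hq⟩ := some_a_mem_mctAllowed.1 hmem; exact ⟨hp, .inl hq⟩
    · obtain ⟨hp, hq⟩ := some_b_mem_mctAllowed.1 hmem; exact ⟨.inl hp, hq⟩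
  · exact fun c hF => (some_a_mem_mctAllowed.1 (hF ▸ (filled c _ hF).2)).2
  · exact fun c hF => (some_b_mem_mctAllowed.1 (hF ▸ (filled c _ hF).2)).1
  · exact fun c hF => ((h c).unforced hF).2.1
  · exact fun c hF => ((h c).unforced hF).2.2
  · intro c hc hp hq hβ hα hF
    simpa [hF, hp, hq, none_mem_mctAllowed] using full c hc hβ hα
  · intro c hc hp hq hβ hα
    simpa [hp, hq, mctAllowed] using full c hc hβ hα
  · intro c hc hp hq hβ hα
    simpa [hp, hq, mctAllowed] using full c hc hβ hα

theorem isMCT_iff_forall_isMCTAt : IsMCT w F ↔ ∀ c, IsMCTAt w F c :=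
  ⟨IsMCT.isMCTAt, isMCT_of_forall_isMCTAt⟩

theorem mctUnforced_succ (F : Filling) (d : ℕ) : MCTUnforced F (d, d + 1) :=
  ⟨d.lt_succ_self, fun ⟨_, h1, h2, _⟩ => by dsimp at h1 h2; omega,
    fun ⟨_, h1, h2, _⟩ => by dsimp at h1 h2; omega⟩

theorem _root_.IsMCT.mem_mctAllowed_succ (h : IsMCT w F) (d : ℕ) :
    F (d, d + 1) ∈ mctAllowed w[d]? w[d + 1]? :=
  (h.isMCTAt _).mem_mctAllowed (mctUnforced_succ F d)

theorem not_mctUnforced_of_le (h : c.2 ≤ c.1) : ¬MCTUnforced F c :=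
  fun hc => absurd hc.1 (not_lt.2 h)

theorem not_mctUnforced_of_beta {j : ℕ} (h1 : c.1 < j) (h2 : j < c.2)
    (hj : F (c.1, j) = some .b) : ¬MCTUnforced F c :=
  fun hc => hc.2.1 ⟨j, h1, h2, hj⟩

theorem not_mctUnforced_of_alpha {i : ℕ} (h1 : c.1 < i) (h2 : i < c.2)
    (hi : F (i, c.2) = some .a) : ¬MCTUnforced F c :=
  fun hc => hc.2.2 ⟨i, h1, h2, hi⟩

end Local

def succAbove (d x : ℕ) : ℕ := if x < d then x else x + 1

def predAbove (d x : ℕ) : ℕ := if x ≤ d then x else x - 1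

theorem succAbove_lt_succAbove_iff {d x y : ℕ} : succAbove d x < succAbove d y ↔ x < y := by
  unfold succAbove; split_ifs <;> omega

theorem succAbove_ne (d x : ℕ) : succAbove d x ≠ d := by
  unfold succAbove; split_ifs <;> omega

theorem succAbove_predAbove {d x : ℕ} (h : x ≠ d) : succAbove d (predAbove d x) = x := by
  unfold succAbove predAbove; split_ifs <;> omega

theorem predAbove_succAbove (d x : ℕ) : predAbove d (succAbove d x) = x := by
  unfold succAbove predAbove; split_ifs <;> omega

theorem getElem?_eraseIdx_eq_succAbove (w : Word) (d x : ℕ) :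
    (w.eraseIdx d)[x]? = w[succAbove d x]? := by
  rw [List.getElem?_eraseIdx, succAbove]; split_ifs <;> rfl

section Deletion

variable {W : Word} {d : ℕ} {P H : Filling}

def eraseLine (d : ℕ) (H : Filling) : Filling := fun c => H (succAbove d c.1, succAbove d c.2)

def insertLine (d : ℕ) (P G : Filling) : Filling := fun c =>
  if c.1 = d ∨ c.2 = d then P c else G (predAbove d c.1, predAbove d c.2)

theorem eraseLine_insertLine (P G : Filling) : eraseLine d (insertLine d P G) = G := by
  funext c
  simp [eraseLine, insertLine, succAbove_ne, predAbove_succAbove]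

theorem insertLine_of_mem_line (P G : Filling) {c : ℕ × ℕ} (hc : c.1 = d ∨ c.2 = d) :
    insertLine d P G c = P c :=
  if_pos hc

theorem eq_insertLine_eraseLine
    (h : ∀ c, c.1 = d ∨ c.2 = d → H c = P c) : H = insertLine d P (eraseLine d H) := by
  funext c
  by_cases hc : c.1 = d ∨ c.2 = d
  · simp [insertLine, hc, h c hc]
  · obtain ⟨h1, h2⟩ := not_or.1 hc
    simp [insertLine, eraseLine, h1, h2, succAbove_predAbove]

/-- A `β` in column `d` or an `α` in row `d` would force boxes off the line `d` to be empty;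
without them, the local conditions off the line only see the erased filling. -/
def LineIsInert (d : ℕ) (H : Filling) : Prop :=
  (∀ x < d, H (x, d) ≠ some .b) ∧ (0 < d → ∀ y, H (d, y) ≠ some .a)

theorem LineIsInert.of_eqOn_line (hP : LineIsInert d P)
    (h : ∀ c, c.1 = d ∨ c.2 = d → H c = P c) : LineIsInert d H :=
  ⟨fun x hx => h (x, d) (.inr rfl) ▸ hP.1 x hx, fun hd y => h (d, y) (.inl rfl) ▸ hP.2 hd y⟩

theorem mctBetaRight_eraseLine_iff (h : LineIsInert d H) {x y : ℕ} :
    MCTBetaRight (eraseLine d H) (x, y) ↔ MCTBetaRight H (succAbove d x, succAbove d y) := by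
  constructor
  · rintro ⟨k, hxk, hky, hk⟩
    exact ⟨succAbove d k, succAbove_lt_succAbove_iff.2 hxk, succAbove_lt_succAbove_iff.2 hky, hk⟩
  · rintro ⟨k, hxk, hky, hk⟩
    obtain rfl | hkd := eq_or_ne k d
    · exact absurd hk (h.1 _ hxk)
    rw [← succAbove_predAbove hkd] at hxk hky hk
    exact ⟨predAbove d k, succAbove_lt_succAbove_iff.1 hxk, succAbove_lt_succAbove_iff.1 hky, hk⟩

theorem mctAlphaBelow_eraseLine_iff (h : LineIsInert d H) {x y : ℕ} :
    MCTAlphaBelow (eraseLine d H) (x, y) ↔ MCTAlphaBelow H (succAbove d x, succAbove d y) := by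
  constructor
  · rintro ⟨i, hxi, hiy, hi⟩
    exact ⟨succAbove d i, succAbove_lt_succAbove_iff.2 hxi, succAbove_lt_succAbove_iff.2 hiy, hi⟩
  · rintro ⟨i, hxi, hiy, hi⟩
    obtain rfl | hid := eq_or_ne i d
    · exact absurd hi (h.2 (by omega) _)
    rw [← succAbove_predAbove hid] at hxi hiy hi
    exact ⟨predAbove d i, succAbove_lt_succAbove_iff.1 hxi, succAbove_lt_succAbove_iff.1 hiy, hi⟩

theorem mctUnforced_eraseLine_iff (h : LineIsInert d H) {x y : ℕ} :
    MCTUnforced (eraseLine d H) (x, y) ↔ MCTUnforced H (succAbove d x, succAbove d y) := by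
  simp only [MCTUnforced, mctBetaRight_eraseLine_iff h, mctAlphaBelow_eraseLine_iff h,
    succAbove_lt_succAbove_iff]

theorem isMCTAt_eraseLine_iff (h : LineIsInert d H) {x y : ℕ} :
    IsMCTAt (W.eraseIdx d) (eraseLine d H) (x, y) ↔
      IsMCTAt W H (succAbove d x, succAbove d y) := by
  simp only [IsMCTAt, mctUnforced_eraseLine_iff h, getElem?_eraseIdx_eq_succAbove]
  rfl

theorem isMCT_iff_eraseLine (h : LineIsInert d H) :
    IsMCT W H ↔
      IsMCT (W.eraseIdx d) (eraseLine d H) ∧ ∀ c, c.1 = d ∨ c.2 = d → IsMCTAt W H c := by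
  simp only [isMCT_iff_forall_isMCTAt, Prod.forall, isMCTAt_eraseLine_iff h]
  refine ⟨fun hH => ⟨fun x y => hH _ _, fun x y _ => hH x y⟩, fun ⟨hoff, hon⟩ x y => ?_⟩
  by_cases hxy : x = d ∨ y = d
  · exact hon x y hxy
  · obtain ⟨hx, hy⟩ := not_or.1 hxy
    rw [← succAbove_predAbove hx, ← succAbove_predAbove hy]
    exact hoff _ _

theorem mctAlphaBelow_insertLine_eraseLine (y : ℕ) :
    MCTAlphaBelow (insertLine d P (eraseLine d H)) (d, y) ↔ MCTAlphaBelow H (d, y) := by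
  have off : ∀ i, d < i → i < y → insertLine d P (eraseLine d H) (i, y) = H (i, y) := by
    intro i h1 h2
    simp [insertLine, eraseLine, h1.ne', (h1.trans h2).ne', succAbove_predAbove]
  exact exists_congr fun i => and_congr_right fun h1 => and_congr_right fun h2 => by
    rw [off i h1 h2]

def mctCount (w : Word) : ℕ := {F | IsMCT w F}.ncard

/-- If the line `d` of every tableau of type `W` in the class `Q` is determined by the rest
through `P`, erasing the line is a bijection onto the tableaux of type `W.eraseIdx d`. -/
theorem ncard_eq_mctCount_eraseIdx (Q : Filling → Prop)
    (P : Filling → Filling) (hP : ∀ G, LineIsInert d (P G))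
    (hline : ∀ H, Q H → ((∀ c, c.1 = d ∨ c.2 = d → IsMCTAt W H c) ↔
      ∀ c, c.1 = d ∨ c.2 = d → H c = P (eraseLine d H) c))
    (hQ : ∀ G, Q (insertLine d (P G) G)) :
    {H | IsMCT W H ∧ Q H}.ncard = mctCount (W.eraseIdx d) := by
  have hdet : ∀ H, IsMCT W H → Q H → ∀ c, c.1 = d ∨ c.2 = d → H c = P (eraseLine d H) c :=
    fun H hH hQH => (hline H hQH).1 fun c _ => hH.isMCTAt c
  have inert : ∀ H, IsMCT W H → Q H → LineIsInert d H := fun H hH hQH =>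
    (hP _).of_eqOn_line (hdet H hH hQH)
  refine Set.BijOn.ncard_eq ⟨fun H ⟨hH, hQH⟩ => ((isMCT_iff_eraseLine (inert H hH hQH)).1 hH).1,
    fun H₁ ⟨hH₁, hQ₁⟩ H₂ ⟨hH₂, hQ₂⟩ heq => ?_, fun G hG => ?_⟩
  · rw [eq_insertLine_eraseLine (hdet H₁ hH₁ hQ₁), eq_insertLine_eraseLine (hdet H₂ hH₂ hQ₂), heq]
  · set H := insertLine d (P G) G
    have hH : eraseLine d H = G := eraseLine_insertLine _ G
    have hon : ∀ c, c.1 = d ∨ c.2 = d → H c = P G c := fun c hc => insertLine_of_mem_line _ _ hc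
    refine ⟨H, ⟨(isMCT_iff_eraseLine ((hP G).of_eqOn_line hon)).2 ⟨hH ▸ hG, ?_⟩, hQ G⟩, hH⟩
    exact (hline H (hQ G)).2 (hH ▸ hon)

theorem ncard_beta_succ_eq_mctCount_eraseIdx (hd : W[d]? = some .D)
    (hd1 : W[d + 1]? = some .E ∨ W[d + 1]? = some .A) :
    {F | IsMCT W F ∧ F (d, d + 1) = some .b}.ncard = mctCount (W.eraseIdx d) := by
  have hline : ∀ H : Filling, H (d, d + 1) = some .b → ∀ c, c.1 = d ∨ c.2 = d →
      (IsMCTAt W H c ↔ H c = Function.update (fun _ => none) (d, d + 1) (some .b) c) := by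
    rintro H hb ⟨x, y⟩ (hx | hy) <;> dsimp only at *
    · subst x
      by_cases hy : y = d + 1
      · subst y
        simp [hb, isMCTAt_iff_of_unforced (mctUnforced_succ H d), some_b_mem_mctAllowed, hd, hd1]
      · rw [isMCTAt_iff_of_not_unforced, Function.update_of_ne (by simp [hy])]
        rcases Nat.lt_or_ge (d + 1) y with hlt | hle
        · exact not_mctUnforced_of_beta (Nat.lt_succ_self d) hlt hb
        · exact not_mctUnforced_of_le (show y ≤ d by omega)
    · subst y
      rw [isMCTAt_iff_of_mctAllowed_eq (by rw [hd]; exact mctAllowed_some_D_right _),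
        Function.update_of_ne (by simp)]
  refine ncard_eq_mctCount_eraseIdx _ (fun _ => _) (fun _ => ⟨fun x _ => ?_, fun _ y => ?_⟩)
    (fun H hb => forall₂_congr (hline H hb)) (fun G => ?_)
  · simp
  · by_cases hy : y = d + 1 <;> simp [hy]
  · rw [insertLine_of_mem_line (c := (d, d + 1)) _ _ (.inl rfl), Function.update_self]

theorem ncard_alpha_succ_eq_mctCount_eraseIdx
    (hd : W[d]? = some .D ∨ W[d]? = some .A) (hd1 : W[d + 1]? = some .E) :
    {F | IsMCT W F ∧ F (d, d + 1) = some .a}.ncard = mctCount (W.eraseIdx (d + 1)) := by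
  have hline : ∀ H : Filling, H (d, d + 1) = some .a → ∀ c, c.1 = d + 1 ∨ c.2 = d + 1 →
      (IsMCTAt W H c ↔ H c = Function.update (fun _ => none) (d, d + 1) (some .a) c) := by
    rintro H ha ⟨x, y⟩ (hx | hy) <;> dsimp only at *
    · subst x
      rw [isMCTAt_iff_of_mctAllowed_eq (by rw [hd1]; exact mctAllowed_some_E_left _),
        Function.update_of_ne (by simp)]
    · subst y
      by_cases hx : x = d
      · subst x
        simp [ha, isMCTAt_iff_of_unforced (mctUnforced_succ H d), some_a_mem_mctAllowed, hd, hd1]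
      · rw [isMCTAt_iff_of_not_unforced, Function.update_of_ne (by simp [hx])]
        rcases Nat.lt_or_ge x d with hlt | hle
        · exact not_mctUnforced_of_alpha hlt (Nat.lt_succ_self d) ha
        · exact not_mctUnforced_of_le (show d + 1 ≤ x by omega)
  refine ncard_eq_mctCount_eraseIdx _ (fun _ => _) (fun _ => ⟨fun x _ => ?_, fun _ y => ?_⟩)
    (fun H ha => forall₂_congr (hline H ha)) (fun G => ?_)
  · by_cases hx : x = d <;> simp [hx]
  · simp
  · rw [insertLine_of_mem_line (c := (d, d + 1)) _ _ (.inr rfl), Function.update_self]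

end Deletion

theorem mctCount_cons_of_ne_D {l : Letter} (hl : l ≠ .D) (w : Word) :
    mctCount (l :: w) = mctCount w := by
  -- The `A`-row on top is forced: `α` exactly in the `E`-columns with no `α` below.
  set P : Filling → Filling := fun G c =>
    if c.1 = 0 ∧ l = .A ∧ (l :: w)[c.2]? = some .E ∧
        ¬MCTAlphaBelow (insertLine 0 (fun _ => none) G) c then some .a else none
  have hP : ∀ G c, P G c ≠ some .b := fun G c => by dsimp only [P]; split_ifs <;> simp
  have hline : ∀ H : Filling, (∀ j, H (0, j) ≠ some .b) → ∀ c, c.1 = 0 ∨ c.2 = 0 →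
      (IsMCTAt (l :: w) H c ↔ H c = P (eraseLine 0 H) c) := by
    rintro H hnb ⟨x, y⟩ (hx | hy) <;> dsimp only at *
    · subst x
      simp only [P, true_and, mctAlphaBelow_insertLine_eraseLine]
      by_cases hu : MCTUnforced H (0, y)
      · rw [isMCTAt_iff_of_unforced hu, List.getElem?_cons_zero, mctAllowed_of_ne_D hl]
        simp only [hu.2.2, not_false_eq_true, and_true]
        split_ifs <;> rfl
      · rw [isMCTAt_iff_of_not_unforced hu, if_neg]
        rintro ⟨rfl, hy, hα⟩
        refine hu ⟨Nat.pos_of_ne_zero fun h => ?_, fun ⟨j, _, _, hj⟩ => hnb j hj, hα⟩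
        subst h
        simp at hy
    · subst y
      rw [isMCTAt_iff_of_not_unforced (not_mctUnforced_of_le (Nat.zero_le x))]
      dsimp only [P]
      rw [if_neg]
      rintro ⟨-, rfl, h, -⟩
      simp at h
  have hcount := ncard_eq_mctCount_eraseIdx (W := l :: w) (d := 0) (fun _ => True) P
    (fun G => ⟨fun _ h => absurd h (Nat.not_lt_zero _), fun h => absurd h (lt_irrefl 0)⟩)
    (fun H _ => ⟨fun h c hc => ?_, fun h c hc => ?_⟩) (fun _ => trivial)
  · simpa [mctCount] using hcount
  · have hnb : ∀ j, H (0, j) ≠ some .b := fun j hj =>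
      hl (by simpa using (h (0, j) (.inl rfl)).getElem?_eq_D hj)
    exact (hline H hnb c hc).1 (h c hc)
  · exact (hline H (fun j => h (0, j) (.inl rfl) ▸ hP _ _) c hc).2 (h c hc)

instance : Finite MSymb :=
  Finite.of_injective (fun s : MSymb => s = .a) fun s t => by cases s <;> cases t <;> simp

theorem finite_setOf_isMCT (w : Word) : {F | IsMCT w F}.Finite := by
  refine Set.Finite.of_finite_image (f := fun (F : Filling) (p : Fin w.length × Fin w.length) =>
    F (p.1, p.2)) (Set.toFinite _) fun F hF G hG h => funext fun c => ?_
  by_cases hc : MCTCell w c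
  · simpa using congrFun h (⟨c.1, hc.1.trans hc.2.1⟩, ⟨c.2, hc.2.1⟩)
  · rw [hF.support c hc, hG.support c hc]

theorem mctCount_replicate_D (j : ℕ) : mctCount (List.replicate j .D) = 1 := by
  have hnone : ∀ x y : ℕ, mctAllowed (List.replicate j Letter.D)[x]? (List.replicate j .D)[y]? =
      {none} := fun x y => by
    rcases lt_or_ge y j with hy | hy
    · rw [List.getElem?_replicate_of_lt hy, mctAllowed_some_D_right]
    · rw [List.getElem?_eq_none (l := List.replicate j Letter.D) (i := y) (by simpa using hy),
        mctAllowed_none_right]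
  have : {F | IsMCT (List.replicate j .D) F} = {fun _ => none} := by
    ext F
    simp only [Set.mem_ofPred_eq, isMCT_iff_forall_isMCTAt, Prod.forall,
      isMCTAt_iff_of_mctAllowed_eq (hnone _ _), Set.mem_singleton_iff, funext_iff]
  rw [mctCount, this, Set.ncard_singleton]

theorem mctCount_replicate_D_append_A (j : ℕ) (w : Word) :
    mctCount (List.replicate j .D ++ .A :: w) = mctCount w := by
  induction j with
  | zero => exact mctCount_cons_of_ne_D (by decide) w
  | succ j ih =>
    set W : Word := List.replicate j .D ++ .D :: .A :: w
    have hd : W[j]? = some .D := by simp [W]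
    have hd1 : W[j + 1]? = some .A := by simp [W]
    have hb : ∀ F, IsMCT W F → F (j, j + 1) = some .b := fun F hF => by
      simpa [hd, hd1, mctAllowed] using hF.mem_mctAllowed_succ j
    calc mctCount (List.replicate (j + 1) .D ++ .A :: w)
        = {F | IsMCT W F ∧ F (j, j + 1) = some .b}.ncard := by
          simp only [W, List.replicate_succ', List.append_assoc, List.singleton_append, mctCount]
          congr 1
          ext F
          exact ⟨fun hF => ⟨hF, hb F hF⟩, And.left⟩
      _ = mctCount (W.eraseIdx j) := ncard_beta_succ_eq_mctCount_eraseIdx hd (.inr hd1)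
      _ = mctCount w := by simpa [W, List.eraseIdx_append_of_length_le] using ih

theorem mctCount_replicate_D_append_E_succ (j : ℕ) (w : Word) :
    mctCount (List.replicate (j + 1) .D ++ .E :: w) =
      mctCount (List.replicate j .D ++ .E :: w) + mctCount (List.replicate (j + 1) .D ++ w) := by
  set W : Word := List.replicate j .D ++ .D :: .E :: w
  have hd : W[j]? = some .D := by simp [W]
  have hd1 : W[j + 1]? = some .E := by simp [W]
  have hsplit : {F | IsMCT W F} =
      {F | IsMCT W F ∧ F (j, j + 1) = some .b} ∪ {F | IsMCT W F ∧ F (j, j + 1) = some .a} := by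
    ext F
    have := fun hF : IsMCT W F => hF.mem_mctAllowed_succ j
    simp only [hd, hd1, mctAllowed, Set.mem_insert_iff, Set.mem_singleton_iff] at this
    simp only [Set.mem_ofPred_eq, Set.mem_union]
    tauto
  have hdisj : Disjoint {F | IsMCT W F ∧ F (j, j + 1) = some .b}
      {F | IsMCT W F ∧ F (j, j + 1) = some .a} :=
    Set.disjoint_left.2 fun F hb ha => by simp [hb.2] at ha
  have hW : List.replicate (j + 1) .D ++ .E :: w = W := by
    simp [W, List.replicate_succ']
  rw [hW, mctCount, hsplit,
    Set.ncard_union_eq hdisj ((finite_setOf_isMCT W).subset fun _ => And.left)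
      ((finite_setOf_isMCT W).subset fun _ => And.left),
    ncard_beta_succ_eq_mctCount_eraseIdx hd (.inl hd1),
    ncard_alpha_succ_eq_mctCount_eraseIdx (.inl hd) hd1]
  simp [W, List.eraseIdx_append_of_length_le, List.replicate_succ']

theorem mctCount_replicate_D_append_E (j : ℕ) (w : Word) :
    mctCount (List.replicate j .D ++ .E :: w) =
      ∑ t ∈ Finset.range (j + 1), mctCount (List.replicate t .D ++ w) := by
  induction j with
  | zero => simpa using mctCount_cons_of_ne_D (by decide) w
  | succ j ih => rw [mctCount_replicate_D_append_E_succ, ih, Finset.sum_range_succ _ (j + 1)]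

instance : Finite Letter :=
  Finite.of_injective (fun l : Letter => match l with | .D => (0 : Fin 3) | .A => 1 | .E => 2)
    fun l m => by cases l <;> cases m <;> simp

theorem finite_stateSpace (n r : ℕ) : (stateSpace n r).Finite :=
  (List.finite_length_eq Letter n).subset fun _ hw => hw.1

theorem finsum_mem_eq_add_cons {M : Type*} [AddCommMonoid M] {S : Set Word} (hS : S.Finite)
    (hnil : [] ∉ S) (f : Word → M) :
    ∑ᶠ w ∈ S, f w = ∑ᶠ w ∈ List.cons .D ⁻¹' S, f (.D :: w) +
      ∑ᶠ w ∈ List.cons .E ⁻¹' S, f (.E :: w) + ∑ᶠ w ∈ List.cons .A ⁻¹' S, f (.A :: w) := by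
  have hsplit : S = List.cons .D '' (List.cons .D ⁻¹' S) ∪ List.cons .E '' (List.cons .E ⁻¹' S) ∪
      List.cons .A '' (List.cons .A ⁻¹' S) := by
    ext w
    rcases w with _ | ⟨_ | _ | _, w⟩ <;> simp [hnil]
  have hfin : ∀ l : Letter, (List.cons l '' (List.cons l ⁻¹' S)).Finite := fun l =>
    hS.subset (Set.image_preimage_subset _ _)
  have hinj : ∀ l : Letter, Set.InjOn (List.cons l) (List.cons l ⁻¹' S) := fun l =>
    List.cons_injective.injOn
  have hdisj : ∀ {l m : Letter}, l ≠ m → ∀ T U : Set Word,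
      Disjoint (List.cons l '' T) (List.cons m '' U) := fun hlm T U =>
    Set.disjoint_left.2 fun _ ⟨_, _, hw⟩ ⟨_, _, hw'⟩ =>
      hlm (List.cons_eq_cons.1 (hw.trans hw'.symm)).1
  conv_lhs => rw [hsplit]
  rw [finsum_mem_union (Set.disjoint_union_left.2 ⟨hdisj (by decide) _ _, hdisj (by decide) _ _⟩)
      ((hfin _).union (hfin _)) (hfin _),
    finsum_mem_union (hdisj (by decide) _ _) (hfin _) (hfin _), finsum_mem_image (hinj _),
    finsum_mem_image (hinj _), finsum_mem_image (hinj _)]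

theorem cons_preimage_stateSpace_succ {l : Letter} (hl : l ≠ .A) (n r : ℕ) :
    List.cons l ⁻¹' stateSpace (n + 1) r = stateSpace n r := by
  ext w; simp [stateSpace, hl]

theorem cons_A_preimage_stateSpace_succ (n r : ℕ) :
    List.cons .A ⁻¹' stateSpace (n + 1) r = {w | w.length = n ∧ w.count .A + 1 = r} := by
  ext w; simp [stateSpace]

def mctSum (n j r : ℕ) : ℕ := ∑ᶠ w ∈ stateSpace n r, mctCount (List.replicate j .D ++ w)

theorem mctSum_eq_zero_of_lt {n r : ℕ} (h : n < r) (j : ℕ) : mctSum n j r = 0 := by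
  have : stateSpace n r = ∅ := Set.eq_empty_of_forall_notMem fun w ⟨hw, hr⟩ =>
    absurd (hw ▸ hr ▸ w.count_le_length) (not_le.2 h)
  simp [mctSum, this]

theorem mctSum_zero (j : ℕ) : mctSum 0 j 0 = 1 := by
  have : stateSpace 0 0 = {[]} := by ext w; simp +contextual [stateSpace]
  simp [mctSum, this, mctCount_replicate_D]

theorem mctSum_succ (n j r : ℕ) :
    mctSum (n + 1) j r = mctSum n (j + 1) r + ∑ t ∈ Finset.range (j + 1), mctSum n t r +
      ∑ᶠ w ∈ {w | w.length = n ∧ w.count .A + 1 = r}, mctCount w := by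
  rw [mctSum, finsum_mem_eq_add_cons (finite_stateSpace _ _) (by simp [stateSpace]),
    cons_preimage_stateSpace_succ (by decide), cons_preimage_stateSpace_succ (by decide),
    cons_A_preimage_stateSpace_succ]
  simp only [mctCount_replicate_D_append_E, mctCount_replicate_D_append_A]
  have hcomm : ∑ᶠ w ∈ stateSpace n r, ∑ t ∈ Finset.range (j + 1),
      mctCount (List.replicate t .D ++ w) = ∑ t ∈ Finset.range (j + 1), mctSum n t r := by
    simp only [mctSum, ← finsum_mem_coe_finset]
    exact finsum_mem_comm _ (finite_stateSpace n r) (Finset.finite_toSet _)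
  rw [hcomm, mctSum]
  simp only [List.replicate_succ', List.append_assoc, List.singleton_append]

def ballot : ℕ → ℕ → ℤ
  | _, 0 => 1
  | N, k + 1 => N.choose (k + 1) - N.choose k

theorem ballot_succ_succ (N k : ℕ) : ballot (N + 1) (k + 1) = ballot N (k + 1) + ballot N k := by
  cases k with
  | zero => simp [ballot]
  | succ k => simp only [ballot, Nat.choose_succ_succ' N]; push_cast; ring

theorem ballot_two_mul_add_one_succ (n : ℕ) : ballot (2 * n + 1) (n + 1) = 0 := by
  simp [ballot, Nat.choose_symm_half]

theorem sum_range_ballot_add (M k j : ℕ) :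
    ∑ t ∈ Finset.range (j + 1), ballot (M + t) k + ballot M (k + 1) =
      ballot (M + j + 1) (k + 1) := by
  induction j with
  | zero => simp [ballot_succ_succ, add_comm]
  | succ j ih =>
    rw [Finset.sum_range_succ, add_right_comm, ih, ← add_assoc, ballot_succ_succ (M + j + 1)]

theorem ballot_mul (N k : ℕ) :
    (ballot N k : ℚ) * ((N : ℚ) + 1 - k) = N.choose k * ((N : ℚ) + 1 - 2 * k) := by
  cases k with
  | zero => simp [ballot]
  | succ k =>
    rcases le_or_gt k N with hk | hk
    · have h : (N.choose (k + 1) : ℚ) * (k + 1) = N.choose k * (N - k) := by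
        rw [← Nat.cast_sub hk]; exact_mod_cast Nat.choose_succ_right_eq N k
      simp only [ballot]; push_cast; linear_combination h
    · simp [ballot, Nat.choose_eq_zero_of_lt hk, Nat.choose_eq_zero_of_lt (Nat.lt_succ_of_lt hk)]

theorem mctSum_eq_ballot {n r : ℕ} (hr : r ≤ n) (j : ℕ) :
    (mctSum n j r : ℤ) = ballot (2 * n + j + 1) (n - r) := by
  induction n generalizing j r with
  | zero =>
    obtain rfl : r = 0 := by omega
    simp [mctSum_zero, ballot]
  | succ n ih =>
    have hA : ((∑ᶠ w ∈ {w : Word | w.length = n ∧ w.count .A + 1 = r}, mctCount w : ℕ) : ℤ) =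
        ballot (2 * n + 1) (n + 1 - r) := by
      rcases r with _ | r
      · simp [ballot_two_mul_add_one_succ]
      · have hS : {w : Word | w.length = n ∧ w.count .A + 1 = r + 1} = stateSpace n r := by
          simp [stateSpace]
        rw [hS, show n + 1 - (r + 1) = n - r by omega, ← ih (by omega) 0]
        rfl
    rw [mctSum_succ]
    push_cast
    rw [hA]
    rcases Nat.lt_or_ge n r with hnr | hrn
    · obtain rfl : r = n + 1 := by omega
      simp [mctSum_eq_zero_of_lt hnr, ballot]
    · rw [ih hrn, Finset.sum_congr rfl fun t _ => ih hrn t, show n + 1 - r = n - r + 1 by omega]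
      generalize n - r = k
      rw [show 2 * (n + 1) + j + 1 = 2 * n + 1 + j + 1 + 1 by ring,
        ballot_succ_succ (2 * n + 1 + j + 1), ← sum_range_ballot_add (2 * n + 1) k j]
      simp only [show ∀ t, 2 * n + t + 1 = 2 * n + 1 + t from fun t => by ring]
      rw [← add_assoc (2 * n + 1) j 1]
      ring

end MultiCatalan

/-- The number of multi-Catalan tableaux of size `n` whose
type has `r` `A`'s is `(2(r+1)/(n+r+2)) C(2n+1, n-r)`. -/
theorem mct_count (n r : ℕ) (hrn : r ≤ n) :
    ((∑ᶠ u ∈ stateSpace n r, Set.ncard {F | IsMCT u F} : ℕ) : ℚ) =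
      2 * ((r : ℚ) + 1) / ((n : ℚ) + (r : ℚ) + 2) * (((2 * n + 1).choose (n - r) : ℚ)) := by
  have hsum : ((∑ᶠ u ∈ stateSpace n r, Set.ncard {F | IsMCT u F} : ℕ) : ℚ) =
      MultiCatalan.ballot (2 * n + 1) (n - r) := by
    exact_mod_cast MultiCatalan.mctSum_eq_ballot hrn 0
  have hmul := MultiCatalan.ballot_mul (2 * n + 1) (n - r)
  push_cast [Nat.cast_sub hrn] at hmul
  rw [hsum, div_mul_eq_mul_div, eq_div_iff (by positivity)]
  linear_combination hmul

end
end

section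
/- For all integers 0 ≤ r ≤ n: Σ_{k=0}^{n−r} [(r+1)/(n+1)] · C(n+1, k) · C(n+1, n−r−k) = [2(r+1)/(n+r+2)] · C(2n+1, n−r), as an identity of rational numbers. -/
/-!
By Vandermonde's identity the sum is `(r+1)/(n+1) · C(2n+2, n-r)`. Absorption,
`C(2n+1, m) · (2n+2) = C(2n+2, m) · (2n+2-m)`, at `m = n - r` (so `2n+2-m = n+r+2`)
turns this into the right-hand side.
-/

theorem sum_range_choose_mul_choose_sub (a b m : ℕ) :
    ∑ k ∈ Finset.range (m + 1), a.choose k * b.choose (m - k) = (a + b).choose m := by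
  rw [Nat.add_choose_eq,
    Finset.Nat.sum_antidiagonal_eq_sum_range_succ (fun i j => a.choose i * b.choose j)]

/-- For all `0 ≤ r ≤ n`,
`Σ_{k=0}^{n-r} ((r+1)/(n+1)) C(n+1, k) C(n+1, n-r-k)
  = (2(r+1)/(n+r+2)) C(2n+1, n-r)`. -/
theorem mct_consistency_counts (n r : ℕ) (hrn : r ≤ n) :
    (∑ k ∈ Finset.range (n - r + 1),
        ((r : ℚ) + 1) / ((n : ℚ) + 1) * (((n + 1).choose k : ℚ)) *
          (((n + 1).choose (n - r - k) : ℚ))) =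
      2 * ((r : ℚ) + 1) / ((n : ℚ) + (r : ℚ) + 2) * (((2 * n + 1).choose (n - r) : ℚ)) := by
  have vandermonde : (∑ k ∈ Finset.range (n - r + 1),
      ((n + 1).choose k : ℚ) * ((n + 1).choose (n - r - k) : ℚ)) = (2 * n + 2).choose (n - r) := by
    rw [show 2 * n + 2 = (n + 1) + (n + 1) by ring, ← sum_range_choose_mul_choose_sub]
    push_cast
    rfl
  have absorption : ((2 * n + 1).choose (n - r) : ℚ) * (2 * n + 2)
      = (2 * n + 2).choose (n - r) * ((n : ℚ) + r + 2) := by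
    have h := Nat.choose_mul_succ_eq (2 * n + 1) (n - r)
    rw [show 2 * n + 1 + 1 - (n - r) = n + r + 2 by omega] at h
    exact_mod_cast h
  simp_rw [mul_assoc, ← Finset.mul_sum, vandermonde]
  field_simp
  linear_combination (-1 : ℚ) * absorption
end
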